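/- The F-transform of the arcsine distribution with mean 0 and variance σ² equals F(z) = √(z² - 2σ²) for z in the upper half-plane, where the branch of the square root is chosen to map ℂ minus the nonnegative reals holomorphically with √(z²-2σ²) ~ z as z → ∞ in ℍ. -/

import Mathlib

/-!
Substituting `x = √(2v) cos θ` turns the arcsine law into the uniform law on `[0, π]`, and by
symmetry `G(z) = (2π)⁻¹ ∫₀^{2π} (z - c cos θ)⁻¹ dθ` with `c = √(2v)`. On the unit circle
`w = e^{iθ}` this is a contour integral of a rational function with poles at `(z ± s)/c`, whose
product is `1`; the residue at the pole inside the disc gives `G(z) = 1/s`, where `s` is the root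
of `s² = z² - c²` with `‖z + s‖ > c`. On the upper half-plane `‖z + s z‖ = c` is impossible
(it would force `z - s z = conj (z + s z)`, hence `z` real), so by connectedness and the
asymptotics `s z ~ z` the given branch satisfies `‖z + s z‖ > c` everywhere.
-/

open MeasureTheory Complex Filter

/-- The arcsine distribution with mean `0` and variance `v`, given by the density
`1/(π √(2v - x²))` on `(-√(2v), √(2v))` (the density vanishes elsewhere since in Lean
division by zero is zero). -/
noncomputable def arcsineMeasure (v : ℝ) : Measure ℝ :=
  MeasureTheory.volume.withDensity fun x =>
    ENNReal.ofReal (1 / (Real.pi * Real.sqrt (2 * v - x ^ 2)))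

open Set
open scoped Real Topology

theorem sub_mul_sub_eq_mul_sub_mul_cos {z c s w : ℂ} (hc : c ≠ 0) (hs : s ^ 2 = z ^ 2 - c ^ 2)
    {θ : ℝ} (hw : w = exp (θ * I)) :
    (w - (z + s) / c) * (w - (z - s) / c) = -(2 * w / c) * (z - c * cos θ) := by
  have hcos : 2 * w * cos θ = w ^ 2 + 1 := by
    have : exp (-θ * I) = w⁻¹ := by rw [hw, neg_mul, exp_neg]
    rw [cos, this, hw]
    field_simp
  field_simp
  linear_combination -hs - c ^ 2 * hcos

theorem integral_inv_sub_mul_cos {z c s : ℂ} (hc : c ≠ 0) (hs : s ^ 2 = z ^ 2 - c ^ 2)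
    (hzs : ‖c‖ < ‖z + s‖) :
    ∫ θ in (0)..(2 * π), (z - c * cos θ)⁻¹ = 2 * π / s := by
  set a := (z + s) / c
  set b := (z - s) / c
  have hab : a * b = 1 := by
    simp only [a, b]
    field_simp
    linear_combination -hs
  have ha : 1 < ‖a‖ := by
    rwa [norm_div, one_lt_div (norm_pos_iff.mpr hc)]
  have hb : ‖b‖ < 1 := by
    have : ‖a‖ * ‖b‖ = 1 := by rw [← norm_mul, hab, norm_one]
    nlinarith [norm_nonneg b]
  have hcauchy : ∮ w in C(0, 1), (w - b)⁻¹ • (w - a)⁻¹ = (2 * π * I) • (b - a)⁻¹ := by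
    refine DifferentiableOn.circleIntegral_sub_inv_smul ?_ (by simpa using hb)
    refine (differentiableOn_id.sub_const a).inv fun w hw h => ?_
    rw [mem_closedBall_zero_iff, show w = a from sub_eq_zero.mp h] at hw
    linarith
  have hcircle : ∫ θ in (0)..(2 * π), (z - c * cos θ)⁻¹ =
      (2 * I / c) * ∮ w in C(0, 1), (w - b)⁻¹ • (w - a)⁻¹ := by
    rw [circleIntegral, ← intervalIntegral.integral_const_mul]
    refine intervalIntegral.integral_congr fun θ _ => ?_
    have hw : circleMap 0 1 θ = exp (θ * I) := by simp [circleMap]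
    have hw0 : circleMap 0 1 θ ≠ 0 := by simp [hw, exp_ne_zero]
    simp only [deriv_circleMap, smul_eq_mul]
    rw [← mul_inv, mul_comm (circleMap 0 1 θ - b), sub_mul_sub_eq_mul_sub_mul_cos hc hs hw]
    rw [mul_inv (-(2 * _ / c))]
    field_simp
    linear_combination (z - c * cos θ)⁻¹ * I_sq
  have hs0 : s ≠ 0 := by
    rintro rfl
    have hz2 : z ^ 2 = c ^ 2 := by linear_combination -hs
    have : ‖z‖ ^ 2 = ‖c‖ ^ 2 := by rw [← norm_pow, ← norm_pow, hz2]
    rw [add_zero] at hzs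
    nlinarith [norm_nonneg c]
  rw [hcircle, hcauchy, smul_eq_mul, show b - a = -(2 * s / c) by simp only [a, b]; ring]
  field_simp
  linear_combination -I_sq

theorem image_mul_cos_Ioo {c : ℝ} (hc : 0 < c) :
    (fun θ => c * Real.cos θ) '' Ioo 0 π = Ioo (-c) c := by
  have hcos : Real.cos '' Ioo 0 π = Ioo (-1) 1 := Real.cosPartialHomeomorph.image_source_eq_target
  rw [← image_image (c * ·) Real.cos, hcos, image_mul_left_Ioo hc, mul_neg_one, mul_one]

theorem integral_arcsineMeasure {E : Type*} [NormedAddCommGroup E] [NormedSpace ℝ E] {v : ℝ}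
    (hv : 0 < v) (f : ℝ → E) :
    ∫ x, f x ∂arcsineMeasure v = π⁻¹ • ∫ θ in (0)..π, f (√(2 * v) * Real.cos θ) := by
  set c := √(2 * v)
  have hc : 0 < c := Real.sqrt_pos.mpr (by linarith)
  have hc2 : c ^ 2 = 2 * v := Real.sq_sqrt (by linarith)
  have hdensity_meas : Measurable fun x : ℝ => ENNReal.ofReal (1 / (π * √(2 * v - x ^ 2))) := by
    fun_prop
  rw [arcsineMeasure, integral_withDensity_eq_integral_toReal_smul hdensity_meas
    (Eventually.of_forall fun _ => ENNReal.ofReal_lt_top) f]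
  have hdensity : ∀ x, (ENNReal.ofReal (1 / (π * √(2 * v - x ^ 2)))).toReal =
      1 / (π * √(2 * v - x ^ 2)) := fun x => ENNReal.toReal_ofReal (by positivity)
  have hvanish : ∀ x ∉ Ioo (-c) c, (1 / (π * √(2 * v - x ^ 2))) • f x = 0 := by
    intro x hx
    have hx2 : 2 * v - x ^ 2 ≤ 0 := by
      rw [mem_Ioo, not_and_or, not_lt, not_lt] at hx
      rw [← hc2, sub_nonpos, sq_le_sq, abs_of_pos hc, le_abs']
      tauto
    simp [Real.sqrt_eq_zero_of_nonpos hx2]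
  simp only [hdensity]
  rw [← setIntegral_eq_integral_of_forall_compl_eq_zero hvanish,
    ← image_mul_cos_Ioo hc, integral_image_eq_integral_abs_deriv_smul measurableSet_Ioo
      (fun θ _ => ((Real.hasDerivAt_cos θ).const_mul c).hasDerivWithinAt)
      ((mul_right_injective₀ hc.ne').comp_injOn (Real.injOn_cos.mono Ioo_subset_Icc_self)),
    intervalIntegral.integral_of_le Real.pi_pos.le, integral_Ioc_eq_integral_Ioo,
    ← integral_smul]
  refine setIntegral_congr_fun measurableSet_Ioo fun θ hθ => ?_
  have hsin : 0 < Real.sin θ := Real.sin_pos_of_pos_of_lt_pi hθ.1 hθ.2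
  have hsqrt : √(2 * v - (c * Real.cos θ) ^ 2) = c * Real.sin θ := by
    rw [← hc2, show c ^ 2 - (c * Real.cos θ) ^ 2 = (c * Real.sin θ) ^ 2 by
      linear_combination -c ^ 2 * Real.sin_sq_add_cos_sq θ, Real.sqrt_sq (by positivity)]
  simp only [hsqrt, smul_smul, mul_neg, abs_neg, abs_of_pos (mul_pos hc hsin)]
  congr 1
  field_simp

theorem integral_comp_cos_zero_two_pi {E : Type*} [NormedAddCommGroup E] [NormedSpace ℝ E]
    (f : ℝ → E) (hf : IntervalIntegrable (fun θ => f (Real.cos θ)) volume 0 π) :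
    ∫ θ in (0)..(2 * π), f (Real.cos θ) = (2 : ℝ) • ∫ θ in (0)..π, f (Real.cos θ) := by
  have hreflect : ∫ θ in π..(2 * π), f (Real.cos θ) = ∫ θ in (0)..π, f (Real.cos θ) := by
    have := intervalIntegral.integral_comp_sub_left (fun θ => f (Real.cos θ))
      (a := π) (b := 2 * π) (2 * π)
    rw [sub_self, show 2 * π - π = π by ring] at this
    simpa only [Real.cos_two_pi_sub] using this
  have hf' : IntervalIntegrable (fun θ => f (Real.cos θ)) volume π (2 * π) := by
    simpa [Real.cos_two_pi_sub, show 2 * π - π = π by ring] using (hf.comp_sub_left (2 * π)).symm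
  rw [← intervalIntegral.integral_add_adjacent_intervals hf hf', hreflect, two_smul]

theorem norm_add_ne_of_sq_eq {c : ℝ} (hc : 0 < c) {z s : ℂ} (hz : 0 < z.im)
    (hs : s ^ 2 = z ^ 2 - c ^ 2) : ‖z + s‖ ≠ c := by
  intro h
  have hne : z + s ≠ 0 := by
    rintro h0
    rw [h0, norm_zero] at h
    exact hc.ne h
  have hconj : z - s = starRingEnd ℂ (z + s) := by
    refine mul_left_cancel₀ hne ?_
    rw [mul_conj, normSq_eq_norm_sq, h]
    push_cast
    linear_combination -hs
  have him := congrArg im hconj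
  simp only [sub_im, conj_im, add_im] at him
  linarith

theorem tendsto_norm_mul_I_add_atTop {s : ℂ → ℂ}
    (hasymp : Tendsto (fun y : ℝ => s (y * I) / (y * I)) atTop (𝓝 1)) :
    Tendsto (fun y : ℝ => ‖y * I + s (y * I)‖) atTop atTop := by
  have hlim : Tendsto (fun y : ℝ => ‖1 + s (y * I) / (y * I)‖) atTop (𝓝 2) := by
    simpa [one_add_one_eq_two] using (hasymp.const_add 1).norm
  refine (tendsto_id.atTop_mul_pos two_pos hlim).congr' ?_
  filter_upwards [eventually_gt_atTop 0] with y hy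
  have hyI : (y : ℂ) * I ≠ 0 := mul_ne_zero (ofReal_ne_zero.mpr hy.ne') I_ne_zero
  rw [show (y : ℂ) * I + s (y * I) = y * I * (1 + s (y * I) / (y * I)) by
      rw [mul_add, mul_one, mul_div_cancel₀ _ hyI], norm_mul,
    norm_mul, norm_I, mul_one, norm_real, Real.norm_of_nonneg hy.le, id]

theorem norm_add_gt_of_sq_eq {c : ℝ} (hc : 0 < c) {s : ℂ → ℂ} (hs : ContinuousOn s {z | 0 < z.im})
    (hsq : ∀ z : ℂ, 0 < z.im → s z ^ 2 = z ^ 2 - c ^ 2)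
    (hasymp : Tendsto (fun y : ℝ => s (y * I) / (y * I)) atTop (𝓝 1)) {z : ℂ} (hz : 0 < z.im) :
    c < ‖z + s z‖ := by
  obtain ⟨y, hfar, hy⟩ :=
    ((tendsto_norm_mul_I_add_atTop hasymp).eventually_gt_atTop c).and (eventually_gt_atTop 0) |>.exists
  by_contra! hnear
  obtain ⟨w, hw, hwc⟩ := (convex_halfSpace_im_gt 0).isPreconnected.intermediate_value hz
    (show 0 < (y * I).im by simpa using hy)
    (continuous_norm.comp_continuousOn (continuousOn_id.add hs)) ⟨hnear, hfar.le⟩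
  exact norm_add_ne_of_sq_eq hc hw (hsq w hw) hwc

/-- The F-transform of the arcsine distribution with mean `0` and variance `v = σ²`
equals `√(z² - 2v)` on the upper half-plane, where `s z = √(z² - 2v)` is the holomorphic
branch of the square root with `s z ~ z` as `z → ∞` in the upper half-plane. -/
theorem arcsine_F_transform (v : ℝ) (hv : 0 < v) (s : ℂ → ℂ)
    (hs : DifferentiableOn ℂ s {z : ℂ | 0 < z.im})
    (hsq : ∀ z : ℂ, 0 < z.im → s z ^ 2 = z ^ 2 - 2 * v)
    (hasymp : Tendsto (fun y : ℝ => s (y * Complex.I) / (y * Complex.I)) atTop (nhds 1)) :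
    ∀ z : ℂ, 0 < z.im →
      (∫ x : ℝ, (z - (x : ℂ))⁻¹ ∂(arcsineMeasure v))⁻¹ = s z := by
  intro z hz
  set c := √(2 * v)
  have hc : 0 < c := Real.sqrt_pos.mpr (by linarith)
  have hc2 : (c : ℂ) ^ 2 = 2 * v := by
    rw [← ofReal_pow, Real.sq_sqrt (by linarith)]
    push_cast
    ring
  have hsq' : ∀ w : ℂ, 0 < w.im → s w ^ 2 = w ^ 2 - (c : ℂ) ^ 2 := fun w hw => hc2 ▸ hsq w hw
  have hbranch := norm_add_gt_of_sq_eq hc hs.continuousOn hsq' hasymp hz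
  have hcircle : ∫ θ in (0)..(2 * π), (z - ↑(c * Real.cos θ))⁻¹ = 2 * π / s z := by
    simpa only [ofReal_mul, ofReal_cos] using integral_inv_sub_mul_cos
      (ofReal_ne_zero.mpr hc.ne') (hsq' z hz) (by rwa [norm_real, Real.norm_of_nonneg hc.le])
  have hintegrable : IntervalIntegrable (fun θ => (z - ↑(c * Real.cos θ))⁻¹) volume 0 π := by
    refine (Continuous.inv₀ (by fun_prop) fun θ h => ?_).intervalIntegrable _ _
    have := congrArg im h
    simp only [sub_im, ofReal_im, zero_im, sub_zero] at this
    linarith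
  have hhalf : ∫ θ in (0)..π, (z - ↑(c * Real.cos θ))⁻¹ = π / s z := by
    have hdouble :=
      integral_comp_cos_zero_two_pi (fun x : ℝ => (z - ((c * x : ℝ) : ℂ))⁻¹) hintegrable
    rw [hcircle, real_smul, ofReal_ofNat] at hdouble
    linear_combination -hdouble / 2
  rw [integral_arcsineMeasure hv, hhalf, real_smul, ofReal_inv, inv_mul_eq_div,
    div_div_cancel_left' (ofReal_ne_zero.mpr Real.pi_ne_zero), inv_inv]
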